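/- arXiv:1504.03459 — 9 statements merged into one kernel-verified Lean document; each statement's English description precedes it below -/
import Mathlib

section
/- A function ψ : F(T) → ℝ on the semigroup of finite subsets of T (with union) is negative definite in the semigroup sense if and only if it is completely alternating. That is, for all n ≥ 2, K₁,…,Kₙ ∈ F(T) and a₁,…,aₙ ∈ ℝ with Σaⱼ = 0 one has Σⱼ Σₖ aⱼ aₖ ψ(Kⱼ ∪ Kₖ) ≤ 0, if and only if for all n ≥ 1, K, K₁,…,Kₙ ∈ F(T), Σ_{I ⊆ {1,…,n}} (−1)^{|I|} ψ(K ∪ ⋃_{i∈I} Kᵢ) ≤ 0. -/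
open Finset

/-- `ψ` is negative definite (in the semigroup sense) on `(Finset T, ∪, ∅)`. -/
def NegDef {T : Type*} [DecidableEq T] (ψ : Finset T → ℝ) : Prop :=
  ∀ n : ℕ, 2 ≤ n → ∀ (K : Fin n → Finset T) (a : Fin n → ℝ),
    (∑ j, a j) = 0 → ∑ j, ∑ k, a j * a k * ψ (K j ∪ K k) ≤ 0

/-- `ψ` is completely alternating on `(Finset T, ∪, ∅)`. -/
def CompAlt {T : Type*} [DecidableEq T] (ψ : Finset T → ℝ) : Prop :=
  ∀ n : ℕ, 1 ≤ n → ∀ (K : Finset T) (Ks : Fin n → Finset T),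
    ∑ I ∈ (Finset.univ : Finset (Fin n)).powerset,
      (-1 : ℝ) ^ I.card * ψ (K ∪ I.sup Ks) ≤ 0

/-! Write `altSum u g = ∑_{I ⊆ u} (-1)^|I| g I`. Because union is idempotent,
`altSum u (I ↦ altSum u (J ↦ g (I ∪ J))) = altSum u g`, so negative definiteness applied to the
sets `K ∪ ⋃_{i ∈ I} K_i` with the weights `(-1)^|I|`, which sum to zero, gives complete
alternation. Conversely, Möbius inversion on the subsets of `U = ⋃ K_j` writes
`ψ S = ∑_{S ⊆ B ⊆ U} c B` with `c B = altSum (U \ B) (C ↦ ψ (B ∪ C))`, which turns the quadratic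
form into `∑_B c B (∑_{K_j ⊆ B} a_j)^2`. The term `B = U` vanishes because `∑ a_j = 0`, and
`c B ≤ 0` for `B ⊂ U` by complete alternation applied to the singletons of `U \ B`. -/

section AltSum

variable {α R : Type*} [Ring R]

def altSum (u : Finset α) (g : Finset α → R) : R :=
  ∑ I ∈ u.powerset, (-1) ^ #I * g I

lemma altSum_sub (u : Finset α) (f g : Finset α → R) :
    altSum u (fun I => f I - g I) = altSum u f - altSum u g := by
  simp only [altSum, mul_sub, sum_sub_distrib]

lemma altSum_image {β : Type*} [DecidableEq β] {f : α → β} {s : Finset α} (hf : Set.InjOn f s)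
    (g : Finset β → R) : altSum (s.image f) g = altSum s (fun I => g (I.image f)) := by
  rw [altSum, powerset_image, sum_image (image_injOn_powerset_of_injOn hf)]
  refine sum_congr rfl fun I hI => ?_
  rw [card_image_of_injOn (hf.mono (mem_powerset.1 hI))]

variable [DecidableEq α]

lemma altSum_insert {x : α} {s : Finset α} (hx : x ∉ s) (g : Finset α → R) :
    altSum (insert x s) g = altSum s g - altSum s (fun I => g (insert x I)) := by
  rw [altSum, sum_powerset_insert hx, sub_eq_add_neg, altSum, altSum, ← sum_neg_distrib]
  congr 1
  refine sum_congr rfl fun I hI => ?_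
  rw [card_insert_of_notMem (notMem_of_mem_powerset_of_notMem hI hx), pow_succ]
  noncomm_ring

lemma altSum_eq_zero_of_insert_eq {x : α} {u : Finset α} (hx : x ∈ u) {g : Finset α → R}
    (hg : ∀ I, g (insert x I) = g I) : altSum u g = 0 := by
  rw [← insert_erase hx, altSum_insert (notMem_erase x u)]
  simp only [hg, sub_self]

lemma altSum_altSum_union (u : Finset α) (g : Finset α → R) :
    altSum u (fun I => altSum u fun J => g (I ∪ J)) = altSum u g := by
  induction u using Finset.induction_on generalizing g with
  | empty => simp [altSum]
  | insert x s hx ih =>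
    have absorb : ∀ I, altSum (insert x s) (fun J => g (insert x I ∪ J)) = 0 := fun I =>
      altSum_eq_zero_of_insert_eq (mem_insert_self x s) fun J => by
        rw [union_insert, insert_union, insert_idem]
    calc altSum (insert x s) (fun I => altSum (insert x s) fun J => g (I ∪ J))
        = altSum s (fun I => altSum (insert x s) fun J => g (I ∪ J)) := by
          rw [altSum_insert hx, sub_eq_self]
          simp only [absorb]
          simp [altSum]
      _ = altSum s fun I =>
            (altSum s fun J => g (I ∪ J)) - altSum s fun J => g (insert x (I ∪ J)) := by
          simp only [altSum_insert hx, union_insert]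
      _ = altSum (insert x s) g := by
          rw [altSum_sub, ih, ih (fun I => g (insert x I)), altSum_insert hx]

lemma sum_powerset_altSum_sdiff (V : Finset α) (g : Finset α → R) :
    ∑ B ∈ V.powerset, altSum (V \ B) (fun C => g (B ∪ C)) = g ∅ := by
  induction V using Finset.induction_on generalizing g with
  | empty => simp [altSum]
  | insert x s hx ih =>
    rw [sum_powerset_insert hx, ← ih g, ← sub_eq_zero, add_sub_right_comm, ← sum_sub_distrib,
      ← sum_add_distrib]
    refine sum_eq_zero fun B hB => ?_
    have hxB : x ∉ B := notMem_of_mem_powerset_of_notMem hB hx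
    rw [insert_sdiff_of_notMem s hxB, altSum_insert (fun h => hx (mem_sdiff.1 h).1),
      insert_sdiff_insert, sdiff_insert_of_notMem hx]
    simp only [union_insert, insert_union]
    abel

lemma sum_Icc_altSum_sdiff {S U : Finset α} (hSU : S ⊆ U) (f : Finset α → R) :
    ∑ B ∈ Icc S U, altSum (U \ B) (fun C => f (B ∪ C)) = f S := by
  have hinj : Set.InjOn (S ∪ ·) (U \ S).powerset := fun X hX Y hY hXY => by
    rw [← union_sdiff_cancel_left (disjoint_sdiff.mono_right (mem_powerset.1 hX)),
      ← union_sdiff_cancel_left (disjoint_sdiff.mono_right (mem_powerset.1 hY))]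
    exact congrArg (· \ S) hXY
  rw [Icc_eq_image_powerset hSU, sum_image hinj]
  have := sum_powerset_altSum_sdiff (U \ S) fun X => f (S ∪ X)
  simpa only [union_empty, Finset.sdiff_sdiff_left', sdiff_union_distrib, union_assoc] using this

end AltSum

lemma sum_sum_mul_sum_Icc_union {ι α R : Type*} [Fintype ι] [DecidableEq α] [CommRing R]
    (U : Finset α) (K : ι → Finset α) (a : ι → R) (c : Finset α → R) :
    ∑ j, ∑ k, a j * a k * ∑ B ∈ Icc (K j ∪ K k) U, c B
      = ∑ B ∈ U.powerset, c B * (∑ j with K j ⊆ B, a j) ^ 2 := by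
  simp_rw [Icc_eq_filter_powerset, sum_filter, union_subset_iff, ite_and, sq, sum_mul_sum,
    mul_sum]
  rw [sum_comm_cycle]
  refine sum_congr rfl fun B _ => sum_congr rfl fun j _ => sum_congr rfl fun k _ => ?_
  split_ifs <;> ring

section NegDefCompAlt

variable {T : Type*} [DecidableEq T] {ψ : Finset T → ℝ}

lemma NegDef.sum_sum_nonpos (h : NegDef ψ) {ι : Type*} [Fintype ι] (hι : 2 ≤ Fintype.card ι)
    (K : ι → Finset T) (a : ι → ℝ) (ha : ∑ i, a i = 0) :
    ∑ j, ∑ k, a j * a k * ψ (K j ∪ K k) ≤ 0 := by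
  let e := Fintype.equivFin ι
  calc ∑ j, ∑ k, a j * a k * ψ (K j ∪ K k)
      = ∑ j, ∑ k, a (e.symm j) * a (e.symm k) * ψ (K (e.symm j) ∪ K (e.symm k)) := by
        rw [← e.symm.sum_comp]
        exact sum_congr rfl fun j _ => (e.symm.sum_comp _).symm
    _ ≤ 0 := h _ hι _ _ (by rwa [← e.symm.sum_comp] at ha)

lemma CompAlt.altSum_nonpos (h : CompAlt ψ) (B : Finset T) {V : Finset T} (hV : V.Nonempty) :
    altSum V (fun C => ψ (B ∪ C)) ≤ 0 := by
  let e : Fin #V → T := Subtype.val ∘ V.equivFin.symm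
  have he : Function.Injective e := Subtype.val_injective.comp V.equivFin.symm.injective
  have himage : univ.image e = V := by
    rw [← image_image, image_univ_equiv, univ_eq_attach, attach_image_val]
  have := h #V hV.card_pos B fun i => {e i}
  rw [← himage, altSum_image he.injOn]
  simpa only [altSum, sup_singleton_apply] using this

lemma NegDef.compAlt (h : NegDef ψ) : CompAlt ψ := by
  intro n hn K Ks
  have hcard : 2 ≤ Fintype.card (Finset (Fin n)) := by
    rw [Fintype.card_finset, Fintype.card_fin]
    exact Nat.one_lt_two_pow (by omega)
  have ha : ∑ I : Finset (Fin n), (-1 : ℝ) ^ #I = 0 := by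
    simpa [altSum] using altSum_eq_zero_of_insert_eq (mem_univ ⟨0, hn⟩) (g := fun _ => (1 : ℝ))
      fun _ => rfl
  have hunion : ∀ I J : Finset (Fin n), K ∪ I.sup Ks ∪ (K ∪ J.sup Ks) = K ∪ (I ∪ J).sup Ks :=
    fun I J => by rw [sup_union, union_union_union_comm, union_self, sup_eq_union]
  have := h.sum_sum_nonpos hcard (fun I => K ∪ I.sup Ks) (fun I => (-1 : ℝ) ^ #I) ha
  calc ∑ I ∈ univ.powerset, (-1 : ℝ) ^ #I * ψ (K ∪ I.sup Ks)
      = altSum univ fun I => altSum univ fun J => ψ (K ∪ (I ∪ J).sup Ks) :=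
        (altSum_altSum_union _ _).symm
    _ ≤ 0 := by simpa only [altSum, powerset_univ, mul_sum, mul_assoc, hunion] using this

lemma CompAlt.negDef (h : CompAlt ψ) : NegDef ψ := by
  intro n _ K a ha
  set U := univ.sup K
  have hKU : ∀ j, K j ⊆ U := fun j => le_sup (mem_univ j)
  have hdecomp : ∀ j k,
      ψ (K j ∪ K k) = ∑ B ∈ Icc (K j ∪ K k) U, altSum (U \ B) (fun C => ψ (B ∪ C)) := fun j k =>
    (sum_Icc_altSum_sdiff (union_subset (hKU j) (hKU k)) ψ).symm
  simp_rw [hdecomp, sum_sum_mul_sum_Icc_union]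
  refine sum_nonpos fun B hB => ?_
  rcases (mem_powerset.1 hB).eq_or_ssubset with rfl | hBU
  · simp [filter_true_of_mem fun j _ => hKU j, ha]
  · exact mul_nonpos_of_nonpos_of_nonneg
      (h.altSum_nonpos B (sdiff_nonempty.2 hBU.not_subset)) (sq_nonneg _)

end NegDefCompAlt

/-- On the idempotent semigroup of finite subsets of `T` under union, a real-valued
function is negative definite if and only if it is completely alternating. -/
theorem negDef_iff_compAlt {T : Type*} [DecidableEq T] (ψ : Finset T → ℝ) :
    NegDef ψ ↔ CompAlt ψ :=
  ⟨NegDef.compAlt, CompAlt.negDef⟩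
end

section
/- Let Y = {Y_t}_{t∈T} be a binary stochastic process with values in {0,1}. Then the capacity functional C : F(T) → ℝ defined by C(∅) = 0 and C(A) = P(∃ t ∈ A with Y_t = 1) for nonempty finite A is completely alternating on the semigroup (F(T), ∪): for all n ≥ 1 and finite subsets K, K₁,…,Kₙ of T, Σ_{I ⊆ {1,…,n}} (−1)^{|I|} C(K ∪ ⋃_{i∈I} Kᵢ) ≤ 0. -/
open Finset MeasureTheory

/-! Write `C A = 1 - E[m_A]`, where `m_A` is the indicator that `Y` vanishes on `A`.
Since `m_{A ∪ B} = m_A m_B` in the ring `Ω → ℝ`, the alternating sum becomes `-E[m_K ∏ᵢ (1 - m_{Kᵢ})]`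
(the constant `1` contributes `∑_I (-1)^|I| = 0` because `n ≥ 1`), and this is `≤ 0`
because `0 ≤ m ≤ 1`. -/

section MultiplicativeOnSup

theorem map_sup_finset_sup_of_map_sup {α ι M : Type*} [SemilatticeSup α] [OrderBot α]
    [CommMonoid M] {m : α → M} (hm : ∀ a b, m (a ⊔ b) = m a * m b)
    (k : α) (f : ι → α) (s : Finset ι) :
    m (k ⊔ s.sup f) = m k * ∏ i ∈ s, m (f i) := by
  induction s using Finset.cons_induction with
  | empty => simp
  | cons j s hj ih => rw [sup_cons, sup_left_comm, hm, ih, prod_cons, mul_left_comm]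

variable {α ι R : Type*} [SemilatticeSup α] [OrderBot α] [CommRing R] {m : α → R}

theorem sum_powerset_neg_one_pow_mul_map_sup (hm : ∀ a b, m (a ⊔ b) = m a * m b)
    (k : α) (f : ι → α) (s : Finset ι) :
    ∑ I ∈ s.powerset, (-1) ^ #I * m (k ⊔ I.sup f) = m k * ∏ i ∈ s, (1 - m (f i)) := by
  classical
  rw [prod_sub, mul_sum]
  refine sum_congr rfl fun I _ => ?_
  rw [map_sup_finset_sup_of_map_sup hm, prod_const_one, mul_one, mul_left_comm]

theorem sum_powerset_neg_one_pow_mul_one_sub_map_sup (hm : ∀ a b, m (a ⊔ b) = m a * m b)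
    (k : α) (f : ι → α) {s : Finset ι} (hs : s.Nonempty) :
    ∑ I ∈ s.powerset, (-1) ^ #I * (1 - m (k ⊔ I.sup f)) = -(m k * ∏ i ∈ s, (1 - m (f i))) := by
  have h_alt : ∑ I ∈ s.powerset, (-1 : R) ^ #I = 0 := by
    exact_mod_cast congrArg (Int.cast : ℤ → R) (sum_powerset_neg_one_pow_card_of_nonempty hs)
  simp_rw [mul_one_sub, sum_sub_distrib, h_alt, sum_powerset_neg_one_pow_mul_map_sup hm, zero_sub]

end MultiplicativeOnSup

section MissIndicator

variable {T Ω : Type*}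

noncomputable def missIndicator (Y : T → Ω → Bool) (S : Finset T) : Ω → ℝ :=
  {ω | ∀ t ∈ S, Y t ω = false}.indicator 1

variable (Y : T → Ω → Bool)

theorem missIndicator_union [DecidableEq T] (A B : Finset T) :
    missIndicator Y (A ∪ B) = missIndicator Y A * missIndicator Y B := by
  rw [missIndicator, missIndicator, missIndicator, ← Set.inter_indicator_one]
  congr 1
  ext ω
  simp only [mem_union, Set.mem_ofPred_eq, Set.mem_inter_iff, or_imp, forall_and]

theorem missIndicator_nonneg (S : Finset T) (ω : Ω) : 0 ≤ missIndicator Y S ω :=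
  Set.indicator_nonneg (fun _ _ => zero_le_one) ω

theorem missIndicator_le_one (S : Finset T) (ω : Ω) : missIndicator Y S ω ≤ 1 :=
  Set.indicator_le_self' (fun _ _ => zero_le_one) ω

theorem one_sub_missIndicator (S : Finset T) :
    1 - missIndicator Y S = {ω | ∃ t ∈ S, Y t ω = true}.indicator 1 := by
  have h_compl : {ω | ∃ t ∈ S, Y t ω = true} = {ω | ∀ t ∈ S, Y t ω = false}ᶜ := by
    ext ω; simp
  rw [h_compl, Set.indicator_compl, missIndicator]

variable {Y} [MeasurableSpace Ω] (P : Measure Ω) (hY : ∀ t, MeasurableSet {ω | Y t ω = true})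
include hY

theorem measurableSet_exists_mem_eq_true (S : Finset T) :
    MeasurableSet {ω | ∃ t ∈ S, Y t ω = true} := by
  convert S.measurableSet_biUnion fun t _ => hY t using 1
  ext ω
  simp

theorem integral_one_sub_missIndicator [IsFiniteMeasure P] (S : Finset T) :
    ∫ ω, (1 - missIndicator Y S) ω ∂P = (P {ω | ∃ t ∈ S, Y t ω = true}).toReal := by
  rw [one_sub_missIndicator, integral_indicator_one (measurableSet_exists_mem_eq_true hY S)]
  rfl

theorem integrable_one_sub_missIndicator [IsFiniteMeasure P] (S : Finset T) :
    Integrable (1 - missIndicator Y S) P := by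
  rw [one_sub_missIndicator]
  exact (integrable_const 1).indicator (measurableSet_exists_mem_eq_true hY S)

end MissIndicator

/-- The capacity functional `C(A) = P(∃ t ∈ A, Y_t = 1)` of a binary stochastic
process `Y` is completely alternating on the semigroup `(Finset T, ∪)`. -/
theorem capacity_completely_alternating {T : Type*} [DecidableEq T]
    {Ω : Type*} [MeasurableSpace Ω] (P : Measure Ω) [IsProbabilityMeasure P]
    (Y : T → Ω → Bool) (hY : ∀ t, MeasurableSet {ω | Y t ω = true})
    (C : Finset T → ℝ)
    (hC : ∀ A : Finset T, C A = (P {ω | ∃ t ∈ A, Y t ω = true}).toReal) :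
    ∀ n : ℕ, 1 ≤ n → ∀ (K : Finset T) (Ks : Fin n → Finset T),
      ∑ I ∈ (Finset.univ : Finset (Fin n)).powerset,
        (-1 : ℝ) ^ I.card * C (K ∪ I.sup Ks) ≤ 0 := by
  intro n hn K Ks
  have hm : ∀ A B : Finset T, missIndicator Y (A ⊔ B) = missIndicator Y A * missIndicator Y B :=
    missIndicator_union Y
  have h_univ : (univ : Finset (Fin n)).Nonempty := univ_nonempty_iff.2 ⟨⟨0, hn⟩⟩
  calc ∑ I ∈ univ.powerset, (-1 : ℝ) ^ #I * C (K ∪ I.sup Ks)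
      = ∫ ω, (∑ I ∈ univ.powerset, (-1) ^ #I * (1 - missIndicator Y (K ⊔ I.sup Ks))) ω ∂P := by
        simp only [hC, ← integral_one_sub_missIndicator P hY, ← integral_const_mul,
          Finset.sum_apply, Pi.mul_apply, Pi.pow_apply, Pi.neg_apply, Pi.one_apply]
        rw [integral_finsetSum _ fun I _ => (integrable_one_sub_missIndicator P hY _).const_mul _]
        rfl
    _ = ∫ ω, -(missIndicator Y K ω * ∏ i, (1 - missIndicator Y (Ks i) ω)) ∂P := by
        rw [sum_powerset_neg_one_pow_mul_one_sub_map_sup hm K Ks h_univ]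
        simp only [Pi.neg_apply, Pi.mul_apply, Finset.prod_apply, Pi.sub_apply, Pi.one_apply]
    _ ≤ 0 := integral_nonpos fun ω => neg_nonpos.2 <| mul_nonneg (missIndicator_nonneg Y K ω) <|
        prod_nonneg fun i _ => sub_nonneg.2 (missIndicator_le_one Y (Ks i) ω)
end

section
/- The consistency condition τ^M_L = τ^{M∪{t}}_L + τ^{M∪{t}}_{L∪{t}} (for all nonempty finite M ⊆ T, nonempty L ⊆ M, t ∈ T∖M) is equivalent to: τ^A_K = Σ_{J ⊆ M∖A} τ^M_{K∪J} for all finite M ⊆ T and all ∅ ≠ K ⊆ A ⊆ M. -/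
open Finset

/-- The consistency condition `τ^M_L = τ^{M∪{t}}_L + τ^{M∪{t}}_{L∪{t}}` is
equivalent to `τ^A_K = ∑_{J ⊆ M∖A} τ^M_{K∪J}` for all `∅ ≠ K ⊆ A ⊆ M`. -/
theorem tau_consistency_iff {T : Type*} [DecidableEq T]
    (τ : Finset T → Finset T → ℝ) :
    (∀ (M L : Finset T) (t : T), L.Nonempty → L ⊆ M → t ∉ M →
      τ M L = τ (insert t M) L + τ (insert t M) (insert t L)) ↔
    (∀ M A K : Finset T, K.Nonempty → K ⊆ A → A ⊆ M →
      τ A K = ∑ J ∈ (M \ A).powerset, τ M (K ∪ J)) := by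
  constructor
  · intro h M A K hK hKA hAM
    induction' hn : (M \ A).card with n ih generalizing A K
    ·
      have he : M \ A = ∅ := card_eq_zero.mp hn
      have hMA : A = M := by
        apply Subset.antisymm hAM
        intro x hx
        by_contra hxA
        have : x ∈ M \ A := mem_sdiff.mpr ⟨hx, hxA⟩
        simp [he] at this
      subst hMA
      simp [he]
    ·
      obtain ⟨t, ht⟩ := card_pos.mp (by omega : 0 < (M \ A).card)
      have htM : t ∈ M := (mem_sdiff.mp ht).1
      have htA : t ∉ A := (mem_sdiff.mp ht).2
      have hA' : insert t A ⊆ M := insert_subset htM hAM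
      have hsd : M \ insert t A = (M \ A).erase t := by
        ext x; simp only [mem_sdiff, mem_erase, mem_insert, not_or]; tauto
      have hcard : (M \ insert t A).card = n := by
        rw [hsd, card_erase_of_mem ht, hn]; rfl
      have h1 := ih (insert t A) K hK (hKA.trans (subset_insert _ _)) hA' hcard
      have h2 := ih (insert t A) (insert t K) ⟨t, mem_insert_self _ _⟩
        (insert_subset_insert _ hKA) hA' hcard
      have hstep := h A K t hK hKA htA
      have ht' : t ∉ M \ insert t A := by simp [hsd]
      have hMA : M \ A = insert t (M \ insert t A) := by
        rw [hsd, insert_erase ht]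
      rw [hstep, h1, h2, hMA, Finset.sum_powerset_insert ht']
      congr 1
      apply Finset.sum_congr rfl
      intro J _
      congr 1
      ext x; simp [mem_insert, mem_union]
  · intro h M L t hL hLM htM
    have hsub : M ⊆ insert t M := subset_insert t M
    have hd : insert t M \ M = {t} := by
      ext x
      simp only [mem_sdiff, mem_insert, mem_singleton]
      constructor
      · rintro ⟨h1 | h1, h2⟩ <;> tauto
      · rintro rfl; exact ⟨Or.inl rfl, htM⟩
    have := h (insert t M) M L hL hLM hsub
    rw [hd, show ({t} : Finset T) = insert t ∅ from rfl,
      Finset.sum_powerset_insert (notMem_empty t)] at this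
    simpa using this
end

section
/- Let θ : F(T) → ℝ be completely alternating with θ(∅) = 0. For nonempty finite M ⊆ T and nonempty L = {t₁,…,t_l} ⊆ M define τ^M_L := Σ_{I ⊆ L} (−1)^{|I|+1} θ((M∖L) ∪ I). Then: (a) τ^M_L ≥ 0; (b) τ^{M∪{t}}_{L∪{t}} = τ^M_L − τ^{M∪{t}}_L for t ∈ T∖M; (c) Σ_{∅≠L⊆A} τ^A_L = θ(A) for every nonempty finite A ⊆ T. -/
open Finset

/-!
Part (a) is complete alternation applied to the singletons of `L` with base set `M ∖ L`.
Part (b) comes from splitting the subsets of `insert t L` according to whether they contain `t`.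
Summing (b) over `L ⊆ A` telescopes, so by induction on `A` the full sum `∑_{L ⊆ A} τ^A_L` is
`-θ ∅`; the term `L = ∅` is `-θ A`, which gives (c).
-/

namespace CompAlt

variable {T : Type*} [DecidableEq T]

def tau (θ : Finset T → ℝ) (M L : Finset T) : ℝ :=
  ∑ I ∈ L.powerset, (-1 : ℝ) ^ (I.card + 1) * θ ((M \ L) ∪ I)

lemma exists_fin_enum (L : Finset T) :
    ∃ (n : ℕ) (f : Fin n → T), Function.Injective f ∧ univ.image f = L := by
  refine ⟨L.card, fun i => L.equivFin.symm i,
    Subtype.val_injective.comp L.equivFin.symm.injective, ?_⟩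
  ext x
  simp only [mem_image, mem_univ, true_and]
  exact ⟨by rintro ⟨i, rfl⟩; exact (L.equivFin.symm i).2,
    fun hx => ⟨L.equivFin ⟨x, hx⟩, by simp⟩⟩

theorem sum_powerset_nonpos {θ : Finset T → ℝ} (hθ : CompAlt θ) (K : Finset T)
    {L : Finset T} (hL : L.Nonempty) :
    ∑ J ∈ L.powerset, (-1 : ℝ) ^ J.card * θ (K ∪ J) ≤ 0 := by
  obtain ⟨n, f, hf, rfl⟩ := exists_fin_enum L
  have hn : 1 ≤ n := Nat.one_le_iff_ne_zero.2 fun h => by subst h; simp at hL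
  rw [powerset_image, sum_image fun I _ J _ h => image_injective hf h]
  simpa [sup_singleton_apply, card_image_of_injective _ hf] using hθ n hn K fun i => {f i}

theorem tau_nonneg {θ : Finset T → ℝ} (hθ : CompAlt θ) (M : Finset T) {L : Finset T}
    (hL : L.Nonempty) : 0 ≤ tau θ M L := by
  have := hθ.sum_powerset_nonpos (M \ L) hL
  simp only [tau, pow_succ, mul_neg_one, neg_mul, sum_neg_distrib]
  linarith

theorem tau_insert_insert (θ : Finset T → ℝ) {M L : Finset T} {t : T} (htM : t ∉ M)
    (htL : t ∉ L) : tau θ (insert t M) (insert t L) = tau θ M L - tau θ (insert t M) L := by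
  have hdiff : insert t M \ insert t L = M \ L := by
    rw [insert_sdiff_insert, sdiff_insert_of_notMem htM]
  have hunion : ∀ I ∈ L.powerset,
      (-1 : ℝ) ^ ((insert t I).card + 1) * θ (M \ L ∪ insert t I)
        = -((-1 : ℝ) ^ (I.card + 1) * θ (insert t (M \ L) ∪ I)) := by
    intro I hI
    rw [card_insert_of_notMem (notMem_of_mem_powerset_of_notMem hI htL), union_insert,
      insert_union]
    ring
  simp only [tau]
  rw [sum_powerset_insert htL, hdiff, insert_sdiff_of_notMem _ htL, sum_congr rfl hunion,
    sum_neg_distrib]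
  ring

theorem tau_empty (θ : Finset T → ℝ) (M : Finset T) : tau θ M ∅ = -θ M := by
  simp [tau]

theorem sum_tau_powerset (θ : Finset T → ℝ) (A : Finset T) :
    ∑ L ∈ A.powerset, tau θ A L = -θ ∅ := by
  induction A using Finset.induction_on with
  | empty => simp [tau_empty]
  | @insert t A htA ih =>
    rw [sum_powerset_insert htA,
      sum_congr rfl fun L hL => tau_insert_insert θ htA (notMem_of_mem_powerset_of_notMem hL htA),
      sum_sub_distrib, ih]
    ring

theorem sum_tau_filter_nonempty (θ : Finset T → ℝ) (A : Finset T) :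
    ∑ L ∈ A.powerset.filter Finset.Nonempty, tau θ A L = θ A - θ ∅ := by
  have hsplit := sum_filter_add_sum_filter_not A.powerset Finset.Nonempty (tau θ A)
  have hempty : A.powerset.filter (fun L => ¬L.Nonempty) = {∅} := by
    ext L
    simp only [mem_filter, mem_powerset, not_nonempty_iff_eq_empty, mem_singleton]
    exact ⟨And.right, fun hL => ⟨hL ▸ empty_subset A, hL⟩⟩
  rw [hempty, sum_singleton, tau_empty, sum_tau_powerset] at hsplit
  linarith

end CompAlt

/-- For a completely alternating `θ` with `θ(∅) = 0`, the coefficients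
`τ^M_L = ∑_{I⊆L} (-1)^{|I|+1} θ((M∖L) ∪ I)` are nonnegative, satisfy the
consistency relation `τ^{M∪{t}}_{L∪{t}} = τ^M_L - τ^{M∪{t}}_L`, and
`∑_{∅≠L⊆A} τ^A_L = θ(A)`. -/
theorem tau_of_compAlt {T : Type*} [DecidableEq T] (θ : Finset T → ℝ)
    (hCA : CompAlt θ) (h0 : θ ∅ = 0)
    (τ : Finset T → Finset T → ℝ)
    (hτ : ∀ M L : Finset T, τ M L =
      ∑ I ∈ L.powerset, (-1 : ℝ) ^ (I.card + 1) * θ ((M \ L) ∪ I)) :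
    (∀ M L : Finset T, L.Nonempty → L ⊆ M → 0 ≤ τ M L) ∧
    (∀ (M L : Finset T) (t : T), L.Nonempty → L ⊆ M → t ∉ M →
      τ (insert t M) (insert t L) = τ M L - τ (insert t M) L) ∧
    (∀ A : Finset T, A.Nonempty →
      ∑ L ∈ A.powerset.filter Finset.Nonempty, τ A L = θ A) := by
  obtain rfl : τ = CompAlt.tau θ := funext₂ hτ
  refine ⟨fun M L hL _ => hCA.tau_nonneg M hL, fun M L t _ hLM htM => ?_, fun A _ => ?_⟩
  · exact CompAlt.tau_insert_insert θ htM fun htL => htM (hLM htL)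
  · rw [CompAlt.sum_tau_filter_nonempty, h0, sub_zero]
end

section
/- For any n ≥ 1 and any subset Q of T, the map A ↦ 𝟙_{A ∩ Q ≠ ∅} from finite subsets of T to {0,1} is completely alternating on the semigroup (F(T), ∪). -/
open Finset

lemma aux_alt_sum {α : Type*} [DecidableEq α] (s : Finset α) :
    ∑ I ∈ s.powerset, (-1:ℝ)^I.card = if s = ∅ then 1 else 0 := by
  have h := Finset.sum_powerset_neg_one_pow_card (α := α) (x := s)
  have h2 : ((∑ I ∈ s.powerset, (-1:ℤ)^I.card : ℤ) : ℝ)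
      = ∑ I ∈ s.powerset, (-1:ℝ)^I.card := by push_cast; rfl
  rw [← h2, h]
  split <;> simp

/-- For any subset `Q` of `T`, the map `A ↦ 𝟙_{A ∩ Q ≠ ∅}` on finite subsets of
`T` is completely alternating on the semigroup `(Finset T, ∪)`. -/
theorem indicator_hits_completely_alternating {T : Type*} [DecidableEq T]
    (Q : Set T) (f : Finset T → ℝ)
    (hf1 : ∀ A : Finset T, (∃ t ∈ A, t ∈ Q) → f A = 1)
    (hf0 : ∀ A : Finset T, ¬(∃ t ∈ A, t ∈ Q) → f A = 0) :
    ∀ n : ℕ, 1 ≤ n → ∀ (K : Finset T) (Ks : Fin n → Finset T),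
      ∑ I ∈ (Finset.univ : Finset (Fin n)).powerset,
        (-1 : ℝ) ^ I.card * f (K ∪ I.sup Ks) ≤ 0 := by
  intro n hn K Ks
  classical
  have hne : (univ : Finset (Fin n)) ≠ ∅ :=
    Finset.nonempty_iff_ne_empty.mp ⟨⟨0, hn⟩, Finset.mem_univ _⟩
  by_cases hK : ∃ t ∈ K, t ∈ Q
  · have h1 : ∀ I ∈ (univ : Finset (Fin n)).powerset,
        (-1:ℝ)^I.card * f (K ∪ I.sup Ks) = (-1:ℝ)^I.card := by
      intro I _
      rw [hf1]
      · ring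
      · obtain ⟨t, ht, htQ⟩ := hK
        exact ⟨t, Finset.mem_union_left _ ht, htQ⟩
    rw [Finset.sum_congr rfl h1, aux_alt_sum, if_neg hne]
  · set C := (univ : Finset (Fin n)).filter (fun i => ¬ ∃ t ∈ Ks i, t ∈ Q) with hC
    have h1 : ∀ I ∈ (univ : Finset (Fin n)).powerset,
        (-1:ℝ)^I.card * f (K ∪ I.sup Ks)
          = (-1:ℝ)^I.card - (-1:ℝ)^I.card * (if I ⊆ C then 1 else 0) := by
      intro I _
      by_cases hI : I ⊆ C
      · rw [hf0, if_pos hI]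
        · ring
        · rintro ⟨t, ht, htQ⟩
          rw [Finset.mem_union] at ht
          rcases ht with h | h
          · exact hK ⟨t, h, htQ⟩
          · rw [Finset.mem_sup] at h
            obtain ⟨i, hi, hti⟩ := h
            have := hI hi
            rw [hC, Finset.mem_filter] at this
            exact this.2 ⟨t, hti, htQ⟩
      · rw [hf1, if_neg hI]
        · ring
        · obtain ⟨i, hiI, hiC⟩ := Finset.not_subset.mp hI
          have hhit : ∃ t ∈ Ks i, t ∈ Q := by
            by_contra h
            exact hiC (by rw [hC, Finset.mem_filter]; exact ⟨Finset.mem_univ i, h⟩)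
          obtain ⟨t, hti, htQ⟩ := hhit
          exact ⟨t, Finset.mem_union_right _ (Finset.mem_sup.mpr ⟨i, hiI, hti⟩), htQ⟩
    rw [Finset.sum_congr rfl h1, Finset.sum_sub_distrib, aux_alt_sum, if_neg hne]
    have hfilter : (univ : Finset (Fin n)).powerset.filter (fun I => I ⊆ C)
        = C.powerset := by
      ext I; simp [Finset.mem_filter, Finset.mem_powerset]
    have h2 : ∑ I ∈ (univ : Finset (Fin n)).powerset,
        (-1:ℝ)^I.card * (if I ⊆ C then 1 else 0)
        = ∑ I ∈ C.powerset, (-1:ℝ)^I.card := by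
      rw [← hfilter, Finset.sum_filter]
      refine Finset.sum_congr rfl fun I _ => ?_
      split <;> ring
    rw [h2, aux_alt_sum]
    split <;> norm_num
end

section
/- For subsets L ⊆ M of a set T with L nonempty and finite, and any Q ⊆ T, the identity Σ_{I ⊆ L} (−1)^{|I|+1} 𝟙_{((M∖L) ∪ I) ∩ Q ≠ ∅} = 𝟙_{L = M ∩ Q} holds. -/
open Finset

private lemma real_sum_powerset_neg_one_pow_card {α : Type*} [DecidableEq α] (x : Finset α) :
    (∑ m ∈ x.powerset, (-1 : ℝ) ^ m.card) = if x = ∅ then 1 else 0 := by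
  have h := Finset.sum_powerset_neg_one_pow_card (x := x)
  have h2 : ((∑ m ∈ x.powerset, (-1 : ℤ) ^ m.card : ℤ) : ℝ)
      = ∑ m ∈ x.powerset, (-1 : ℝ) ^ m.card := by push_cast; rfl
  rw [← h2, h]
  split_ifs <;> norm_num

open scoped Classical in
/-- For `∅ ≠ L ⊆ M` finite and `Q ⊆ T`, the identity
`∑_{I⊆L} (-1)^{|I|+1} 𝟙_{((M∖L)∪I) ∩ Q ≠ ∅} = 𝟙_{L = M ∩ Q}` holds. -/
theorem indicator_alternating_sum_identity {T : Type*} [DecidableEq T]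
    (Q : Set T) (M L : Finset T) (hL : L.Nonempty) (hLM : L ⊆ M)
    (ind : Finset T → ℝ)
    (hind1 : ∀ A : Finset T, (∃ t ∈ A, t ∈ Q) → ind A = 1)
    (hind0 : ∀ A : Finset T, ¬(∃ t ∈ A, t ∈ Q) → ind A = 0) :
    ∑ I ∈ L.powerset, (-1 : ℝ) ^ (I.card + 1) * ind ((M \ L) ∪ I)
      = if (L : Set T) = (M : Set T) ∩ Q then 1 else 0 := by
  classical
  have hzero : ∑ I ∈ L.powerset, (-1 : ℝ) ^ (I.card + 1) = 0 := by
    have : ∑ I ∈ L.powerset, (-1 : ℝ) ^ (I.card + 1)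
        = -∑ I ∈ L.powerset, (-1 : ℝ) ^ I.card := by
      rw [← Finset.sum_neg_distrib]
      exact Finset.sum_congr rfl fun I _ => by ring
    rw [this, real_sum_powerset_neg_one_pow_card,
      if_neg (Finset.nonempty_iff_ne_empty.mp hL), neg_zero]
  by_cases h0 : ∃ t ∈ M \ L, t ∈ Q
  · -- everything indicates 1; sum is 0, RHS is 0
    obtain ⟨t, htML, htQ⟩ := h0
    have hsum : ∀ I ∈ L.powerset, (-1 : ℝ) ^ (I.card + 1) * ind ((M \ L) ∪ I)
        = (-1 : ℝ) ^ (I.card + 1) := by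
      intro I _
      rw [hind1 _ ⟨t, Finset.mem_union_left _ htML, htQ⟩, mul_one]
    rw [Finset.sum_congr rfl hsum, hzero]
    rw [if_neg]
    intro hEq
    have htM := (Finset.mem_sdiff.mp htML).1
    have htL := (Finset.mem_sdiff.mp htML).2
    have : t ∈ (L : Set T) := hEq ▸ ⟨htM, htQ⟩
    exact htL (by exact_mod_cast this)
  · -- (M \ L) ∩ Q = ∅
    have hsum : ∀ I ∈ L.powerset, (-1 : ℝ) ^ (I.card + 1) * ind ((M \ L) ∪ I)
        = (-1 : ℝ) ^ (I.card + 1) + (-1 : ℝ) ^ I.card * (if ∃ t ∈ I, t ∈ Q then 0 else 1) := by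
      intro I _
      by_cases hI : ∃ t ∈ I, t ∈ Q
      · obtain ⟨t, htI, htQ⟩ := hI
        rw [hind1 _ ⟨t, Finset.mem_union_right _ htI, htQ⟩, if_pos ⟨t, htI, htQ⟩]
        ring
      · rw [hind0, if_neg hI]
        · ring
        · rintro ⟨t, ht, htQ⟩
          rcases Finset.mem_union.mp ht with h' | h'
          · exact h0 ⟨t, h', htQ⟩
          · exact hI ⟨t, h', htQ⟩
    rw [Finset.sum_congr rfl hsum, Finset.sum_add_distrib, hzero, zero_add]
    have hfilter : L.powerset.filter (fun I => ¬∃ t ∈ I, t ∈ Q)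
        = (L.filter (fun t => t ∉ Q)).powerset := by
      ext I
      simp only [Finset.mem_filter, Finset.mem_powerset, Finset.subset_iff, Finset.mem_filter]
      constructor
      · rintro ⟨hIL, hnE⟩ x hx
        exact ⟨hIL hx, fun hq => hnE ⟨x, hx, hq⟩⟩
      · rintro h
        exact ⟨fun x hx => (h hx).1, fun ⟨t, ht, htQ⟩ => (h ht).2 htQ⟩
    have : ∑ I ∈ L.powerset, (-1 : ℝ) ^ I.card * (if ∃ t ∈ I, t ∈ Q then 0 else 1)
        = ∑ I ∈ L.powerset.filter (fun I => ¬∃ t ∈ I, t ∈ Q), (-1 : ℝ) ^ I.card := by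
      rw [Finset.sum_filter]
      exact Finset.sum_congr rfl fun I _ => by by_cases h : ∃ t ∈ I, t ∈ Q <;> simp [h]
    rw [this, hfilter, real_sum_powerset_neg_one_pow_card]
    -- now: (if L.filter (· ∉ Q) = ∅ then 1 else 0) = if L = M ∩ Q then 1 else 0
    congr 1
    simp only [eq_iff_iff, Finset.filter_eq_empty_iff]
    constructor
    · intro hLQ
      ext x
      constructor
      · intro hx
        have hxL : x ∈ L := by exact_mod_cast hx
        exact ⟨hLM hxL, not_not.mp (hLQ hxL)⟩
      · rintro ⟨hxM, hxQ⟩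
        have hxM' : x ∈ M := by exact_mod_cast hxM
        by_contra hxL
        have hxL' : x ∉ L := fun h => hxL (by exact_mod_cast h)
        exact h0 ⟨x, Finset.mem_sdiff.mpr ⟨hxM', hxL'⟩, hxQ⟩
    · intro hEq x hxL hxQ
      have : x ∈ (M : Set T) ∩ Q := hEq ▸ (by exact_mod_cast hxL)
      exact hxQ this.2
end

section
/- The set Θ(T) = {θ : F(T) → ℝ : θ negative definite, θ(∅)=0, θ({t})=1 for all t ∈ T} is compact in the topology of pointwise convergence on ℝ^{F(T)}. In particular, a pointwise limit of such functions again belongs to Θ(T), and every θ ∈ Θ(T) satisfies 1 ≤ θ(A) ≤ |A| for nonempty finite A. -/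
open Finset Filter

/-- The set `Θ(T)` of ECFs. -/
def Theta (T : Type*) [DecidableEq T] : Set (Finset T → ℝ) :=
  {θ | NegDef θ ∧ θ ∅ = 0 ∧ ∀ t : T, θ {t} = 1}

/-! Both bounds come from testing negative definiteness on two or four sets:
`ψ A + ψ B ≤ 2 ψ (A ∪ B)` gives `θ ≥ 0` and `θ A ≥ θ {t} = 1` for `t ∈ A`, and
`ψ (A ∪ B) ≤ ψ A + ψ B` gives `θ A ≤ |A|` by adding one point at a time. Hence `Θ(T)` lies in
the compact product `∏_A [0, |A|]`, and it is closed there since each defining condition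
involves only finitely many coordinates. -/

section

variable {T : Type*} [DecidableEq T]

namespace NegDef

variable {ψ : Finset T → ℝ}

theorem add_le_two_mul_union (h : NegDef ψ) (A B : Finset T) :
    ψ A + ψ B ≤ 2 * ψ (A ∪ B) := by
  have := h 2 le_rfl ![A, B] ![1, -1] (by simp)
  simp only [Fin.sum_univ_two, Matrix.cons_val_zero, Matrix.cons_val_one, union_self,
    union_comm B A] at this
  linarith

theorem nonneg (h : NegDef ψ) (h0 : ψ ∅ = 0) (A : Finset T) : 0 ≤ ψ A := by
  have := h.add_le_two_mul_union A ∅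
  rw [h0, union_empty] at this
  linarith

theorem union_le_add (h : NegDef ψ) (h0 : ψ ∅ = 0) (A B : Finset T) :
    ψ (A ∪ B) ≤ ψ A + ψ B := by
  -- the quadratic form of these weights equals `ψ (A ∪ B) - ψ A - ψ B`
  have := h 4 (by norm_num) ![A, B, A ∪ B, ∅] ![1, 1, -1, -1] (by simp [Fin.sum_univ_four])
  simp only [Fin.sum_univ_four, Matrix.cons_val_zero, Matrix.cons_val_one, Matrix.cons_val_two,
    Matrix.cons_val_three, Matrix.tail_cons, Matrix.head_cons, union_self, union_empty,
    empty_union, union_comm B A, union_left_idem, union_left_comm B A B, union_right_comm A B A,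
    union_assoc A B B, h0] at this
  linarith

end NegDef

theorem isClosed_setOf_negDef : IsClosed {ψ : Finset T → ℝ | NegDef ψ} := by
  simp only [NegDef, Set.ofPred_forall]
  exact isClosed_iInter fun _ => isClosed_iInter fun _ => isClosed_iInter fun _ =>
    isClosed_iInter fun _ => isClosed_iInter fun _ => isClosed_le (by fun_prop) continuous_const

theorem isClosed_Theta : IsClosed (Theta T) := by
  simp only [Theta, Set.ofPred_and, Set.ofPred_forall]
  exact isClosed_setOf_negDef.inter <| (isClosed_eq (continuous_apply _) continuous_const).inter <|
    isClosed_iInter fun _ => isClosed_eq (continuous_apply _) continuous_const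

variable {θ : Finset T → ℝ}

theorem one_le_of_mem_Theta (hθ : θ ∈ Theta T) {A : Finset T} (hA : A.Nonempty) : 1 ≤ θ A := by
  obtain ⟨t, ht⟩ := hA
  have := hθ.1.add_le_two_mul_union {t} A
  rw [union_eq_right.2 (singleton_subset_iff.2 ht), hθ.2.2 t] at this
  linarith

theorem le_card_of_mem_Theta (hθ : θ ∈ Theta T) (A : Finset T) : θ A ≤ #A := by
  obtain ⟨hND, h0, h1⟩ := hθ
  induction A using Finset.induction_on with
  | empty => simp [h0]
  | @insert t s ht ih =>
    have := hND.union_le_add h0 {t} s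
    rw [← insert_eq, h1 t] at this
    rw [card_insert_of_notMem ht, Nat.cast_succ]
    linarith

theorem Theta_subset_pi_Icc : Theta T ⊆ Set.univ.pi fun A : Finset T => Set.Icc 0 (#A : ℝ) :=
  fun _ hθ A _ => ⟨hθ.1.nonneg hθ.2.1 A, le_card_of_mem_Theta hθ A⟩

end

/-- `Θ(T)` is compact in the topology of pointwise convergence; in particular it
is closed under pointwise limits, and every `θ ∈ Θ(T)` satisfies
`1 ≤ θ(A) ≤ |A|` for nonempty finite `A`. -/
theorem Theta_compact {T : Type*} [DecidableEq T] :
    IsCompact (Theta T) ∧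
    (∀ (θn : ℕ → Finset T → ℝ) (f : Finset T → ℝ), (∀ n, θn n ∈ Theta T) →
      Tendsto θn atTop (nhds f) → f ∈ Theta T) ∧
    (∀ θ ∈ Theta T, ∀ A : Finset T, A.Nonempty → 1 ≤ θ A ∧ θ A ≤ A.card) :=
  ⟨(isCompact_univ_pi fun _ => isCompact_Icc).of_isClosed_subset isClosed_Theta
      Theta_subset_pi_Icc,
    fun _ _ hmem hlim => isClosed_Theta.mem_of_tendsto hlim (Eventually.of_forall hmem),
    fun _ hθ A hA => ⟨one_le_of_mem_Theta hθ hA, le_card_of_mem_Theta hθ A⟩⟩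
end

section
/- Let g : [0,∞) → [0,∞) be a nonconstant Bernstein function and θ ∈ Θ(T) an ECF (i.e., negative definite on (F(T),∪) with θ(∅)=0 and θ({t})=1). Then the function A ↦ (g(θ(A)) − g(0))/(g(1) − g(0)) is again in Θ(T). -/
open Finset

/-- Membership in `Θ(T)`. -/
def IsECF {T : Type*} [DecidableEq T] (θ : Finset T → ℝ) : Prop :=
  (∀ A, 0 ≤ θ A) ∧ NegDef θ ∧ θ ∅ = 0 ∧ ∀ t : T, θ {t} = 1

/-- `g : [0,∞) → [0,∞)` is a Bernstein function: continuous, nonnegative, and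
negative definite on the semigroup `([0,∞), +, 0)`. -/
def Bernstein (g : ℝ → ℝ) : Prop :=
  ContinuousOn g (Set.Ici 0) ∧ (∀ x ∈ Set.Ici (0 : ℝ), 0 ≤ g x) ∧
  ∀ n : ℕ, 2 ≤ n → ∀ r : Fin n → ℝ, (∀ i, 0 ≤ r i) → ∀ a : Fin n → ℝ,
    (∑ i, a i) = 0 → ∑ i, ∑ j, a i * a j * g (r i + r j) ≤ 0

open Filter Topology

/-!
With `Δ_a f x = f x - f (x + a)`, negative definiteness of `g` on `([0,∞), +)`, applied to the
`2ⁿ` points `x / 2 + ∑ S` (`S ⊆ {a₁, …, aₙ}`) with weights `(-1) ^ |S|`, says exactly that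
`Δ_{a₁} ⋯ Δ_{aₙ} Δ_{a₁} ⋯ Δ_{aₙ} g ≤ 0`. For equal steps these are the even differences; the odd
ones follow because a concave sequence that is bounded below (ultimately by `g ≥ 0`) is
nondecreasing. Splitting steps gives all integer multiples of a common step, and continuity all
nonnegative steps: `g` is completely alternating, `Δ_{a₁} ⋯ Δ_{aₙ} g ≤ 0` for `n ≥ 1`.

Given sets `K₁, …, Kₙ` with union `t`, Möbius inversion on the interval `[∅, t]` writes
`θ (Kⱼ ∪ Kₖ) = c - ∑_{M ⊊ t} w_M 1[Kⱼ ⊆ M] 1[Kₖ ⊆ M]`, and `w_M ≥ 0` is the negative definiteness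
of `θ` tested against the Möbius function `μ(M, ·)`. Removing one block `M` subtracts from the
quadratic form of `g` the form of `y ↦ g (y + w_M) - g y`, which is completely monotone; for
completely monotone functions the same induction over the blocks gives nonnegative forms, so the
form of `g` is nonpositive: `g ∘ θ` is negative definite. The normalization is affine with
positive slope because `g` is nonconstant.
-/

/-- `iterDiff [a₁, …, aₙ] f = Δ_{a₁} ⋯ Δ_{aₙ} f` in the convention `Δ_a f x = f x - f (x + a)` of
Berg–Christensen–Ressel (`-fwdDiff a f`), under which complete monotonicity and complete
alternation carry no signs. -/
def iterDiff : List ℝ → (ℝ → ℝ) → ℝ → ℝ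
  | [], f => f
  | a :: l, f => fun x => iterDiff l f x - iterDiff l f (x + a)

section IterDiff

variable {l l₁ l₂ : List ℝ}

@[simp] lemma iterDiff_nil (f : ℝ → ℝ) : iterDiff [] f = f := rfl

@[simp] lemma iterDiff_cons (a : ℝ) (l : List ℝ) (f : ℝ → ℝ) (x : ℝ) :
    iterDiff (a :: l) f x = iterDiff l f x - iterDiff l f (x + a) := rfl

lemma iterDiff_append (l₁ l₂ : List ℝ) (f : ℝ → ℝ) :
    iterDiff (l₁ ++ l₂) f = iterDiff l₁ (iterDiff l₂ f) := by
  induction l₁ with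
  | nil => rfl
  | cons a l ih => funext x; simp [ih]

lemma iterDiff_neg (l : List ℝ) (f : ℝ → ℝ) (x : ℝ) :
    iterDiff l (fun y => -f y) x = -iterDiff l f x := by
  induction l generalizing x with
  | nil => rfl
  | cons a l ih => simp [ih]; ring

lemma iterDiff_cons_add (a b : ℝ) (l : List ℝ) (f : ℝ → ℝ) (x : ℝ) :
    iterDiff ((a + b) :: l) f x = iterDiff (a :: l) f x + iterDiff (b :: l) f (x + a) := by
  simp [add_assoc]

lemma iterDiff_perm (h : l₁.Perm l₂) (f : ℝ → ℝ) : iterDiff l₁ f = iterDiff l₂ f := by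
  induction h with
  | nil => rfl
  | cons a _ ih => funext x; simp [ih]
  | swap a b l => funext x; simp [add_right_comm]; ring
  | trans _ _ ih₁ ih₂ => rw [ih₁, ih₂]

lemma iterDiff_const (hl : l ≠ []) (c : ℝ) : iterDiff l (fun _ => c) = 0 := by
  induction l with
  | nil => exact absurd rfl hl
  | cons a l ih =>
    funext x
    rcases eq_or_ne l [] with rfl | hl'
    · simp
    · simp [ih hl']

lemma iterDiff_eq_sum_sublists (l : List ℝ) (f : ℝ → ℝ) (x : ℝ) :
    iterDiff l f x = (l.sublists'.map fun s => (-1) ^ s.length * f (x + s.sum)).sum := by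
  induction l generalizing x with
  | nil => simp
  | cons a l ih =>
    simp only [iterDiff_cons, ih, List.sublists'_cons, List.map_append, List.sum_append,
      List.map_map, Function.comp_def, List.length_cons, List.sum_cons, pow_succ', mul_assoc,
      List.sum_map_mul_left, add_assoc]
    ring

end IterDiff

def NegDefOnNonneg (g : ℝ → ℝ) : Prop :=
  ∀ n : ℕ, 2 ≤ n → ∀ r : Fin n → ℝ, (∀ i, 0 ≤ r i) → ∀ a : Fin n → ℝ,
    (∑ i, a i) = 0 → ∑ i, ∑ j, a i * a j * g (r i + r j) ≤ 0

lemma NegDefOnNonneg.iterDiff_append_self_nonpos {g : ℝ → ℝ} (hg : NegDefOnNonneg g)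
    {l : List ℝ} (hl : l ≠ []) (hl₀ : ∀ a ∈ l, 0 ≤ a) {x : ℝ} (hx : 0 ≤ x) :
    iterDiff (l ++ l) g x ≤ 0 := by
  have sum_fin (F : List ℝ → ℝ) :
      ∑ i : Fin l.sublists'.length, F l.sublists'[i] = (l.sublists'.map F).sum := by
    rw [← List.ofFn_getElem_eq_map, List.sum_ofFn]; rfl
  have hlen : 2 ≤ l.sublists'.length := by
    rw [List.length_sublists']
    exact Nat.le_self_pow (List.length_pos_iff.2 hl).ne' 2
  have hr (i : Fin l.sublists'.length) : 0 ≤ x / 2 + l.sublists'[i].sum :=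
    add_nonneg (by linarith) <| List.sum_nonneg fun a ha =>
      hl₀ a ((List.mem_sublists'.1 (List.getElem_mem _)).subset ha)
  have hsigns : ∑ i : Fin l.sublists'.length, (-1 : ℝ) ^ l.sublists'[i].length = 0 := by
    rw [sum_fin (fun s => (-1) ^ s.length)]
    simpa [iterDiff_const hl] using (iterDiff_eq_sum_sublists l (fun _ => 1) 0).symm
  convert hg _ hlen _ hr _ hsigns using 1
  simp only [iterDiff_append, iterDiff_eq_sum_sublists l]
  rw [← sum_fin]
  refine Finset.sum_congr rfl fun i _ => ?_
  rw [← sum_fin, Finset.mul_sum]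
  refine Finset.sum_congr rfl fun j _ => ?_
  rw [show x + l.sublists'[i].sum + l.sublists'[j].sum
    = x / 2 + l.sublists'[i].sum + (x / 2 + l.sublists'[j].sum) by ring]
  ring

lemma apply_zero_le_apply_one_of_concave_of_bddBelow {s : ℕ → ℝ}
    (hconc : ∀ n, s (n + 2) - s (n + 1) ≤ s (n + 1) - s n) (hs : BddBelow (Set.range s)) :
    s 0 ≤ s 1 := by
  by_contra! h
  obtain ⟨B, hB⟩ := hs
  have hdecr : ∀ n : ℕ, s (n + 1) - s n ≤ s 1 - s 0 :=
    fun n => antitone_nat_of_succ_le (f := fun n => s (n + 1) - s n) hconc (Nat.zero_le n)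
  have hlin (n : ℕ) : s n ≤ s 0 + n * (s 1 - s 0) := by
    induction n with
    | zero => simp
    | succ n ih => push_cast; linarith [hdecr n]
  obtain ⟨n, hn⟩ := exists_nat_gt ((s 0 - B) / (s 0 - s 1))
  rw [div_lt_iff₀ (by linarith)] at hn
  linarith [hB ⟨n, rfl⟩, hlin n]

lemma NegDefOnNonneg.iterDiff_replicate_even_nonpos {g : ℝ → ℝ} (hg : NegDefOnNonneg g) {u : ℝ}
    (hu : 0 ≤ u) {m : ℕ} (hm : m ≠ 0) {x : ℝ} (hx : 0 ≤ x) :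
    iterDiff (List.replicate (2 * m) u) g x ≤ 0 := by
  rw [two_mul, List.replicate_add]
  exact hg.iterDiff_append_self_nonpos (by simpa using hm)
    (fun a ha => (List.eq_of_mem_replicate ha).symm ▸ hu) hx

lemma NegDefOnNonneg.iterDiff_replicate_odd_nonpos {g : ℝ → ℝ} (hg : NegDefOnNonneg g)
    (hg₀ : ∀ x, 0 ≤ x → 0 ≤ g x) {u : ℝ} (hu : 0 ≤ u) (m : ℕ) {x : ℝ} (hx : 0 ≤ x) :
    iterDiff (List.replicate (2 * m + 1) u) g x ≤ 0 := by
  set E : ℕ → ℝ → ℝ := fun k => iterDiff (List.replicate k u) g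
  have hE (k : ℕ) (y : ℝ) : E (k + 1) y = E k y - E k (y + u) := rfl
  have hgrid (y : ℝ) (n : ℕ) : y + ((n + 1 : ℕ) : ℝ) * u = y + n * u + u := by push_cast; ring
  have hgrid₀ {y : ℝ} (hy : 0 ≤ y) (n : ℕ) : 0 ≤ y + n * u := by positivity
  have hmono (m : ℕ) {y : ℝ} (hy : 0 ≤ y) : E (2 * m + 1) y ≤ E (2 * m + 1) (y + u) := by
    have := hg.iterDiff_replicate_even_nonpos hu (m := m + 1) (by omega) hy
    rw [show 2 * (m + 1) = 2 * m + 1 + 1 by ring] at this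
    exact sub_nonpos.1 this
  -- `n ↦ E (2m) (y + n u)` is concave by `hmono`, so if it is bounded below it is nondecreasing.
  have odd_of_bddBelow (m : ℕ) {y : ℝ} (hy : 0 ≤ y)
      (hbdd : BddBelow (Set.range fun n : ℕ => E (2 * m) (y + n * u))) :
      E (2 * m + 1) y ≤ 0 := by
    have := apply_zero_le_apply_one_of_concave_of_bddBelow (fun n => ?_) hbdd
    · simp only [Nat.cast_zero, zero_mul, add_zero, Nat.cast_one, one_mul] at this
      rw [hE]; linarith
    · have := hmono m (hgrid₀ hy n)
      simp only [hE, hgrid, show ((n + 2 : ℕ) : ℝ) = n + 1 + 1 by push_cast; ring, add_mul,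
        one_mul, ← add_assoc] at this ⊢
      linarith
  induction m generalizing x with
  | zero => exact odd_of_bddBelow 0 hx ⟨0, by rintro _ ⟨n, rfl⟩; exact hg₀ _ (hgrid₀ hx n)⟩
  | succ m ih =>
    -- `E (2m + 2) z ≥ E (2m + 1) z ≥ E (2m + 1) x`, since `E (2m + 1) ≤ 0` rises along the grid.
    refine odd_of_bddBelow _ hx ⟨E (2 * m + 1) x, ?_⟩
    rintro _ ⟨n, rfl⟩
    have hlow : E (2 * m + 1) x ≤ E (2 * m + 1) (x + n * u) := by
      induction n with
      | zero => simp
      | succ n ihn => rw [hgrid]; exact ihn.trans (hmono m (hgrid₀ hx n))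
    have := ih (add_nonneg (hgrid₀ hx n) hu)
    simp only [show 2 * (m + 1) = 2 * m + 1 + 1 by ring, hE (2 * m + 1)]
    linarith

lemma NegDefOnNonneg.iterDiff_replicate_nonpos {g : ℝ → ℝ} (hg : NegDefOnNonneg g)
    (hg₀ : ∀ x, 0 ≤ x → 0 ≤ g x) {u : ℝ} (hu : 0 ≤ u) {k : ℕ} (hk : k ≠ 0) {x : ℝ}
    (hx : 0 ≤ x) : iterDiff (List.replicate k u) g x ≤ 0 := by
  obtain ⟨m, rfl | rfl⟩ := Nat.even_or_odd' k
  · exact hg.iterDiff_replicate_even_nonpos hu (by omega) hx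
  · exact hg.iterDiff_replicate_odd_nonpos hg₀ hu m hx

lemma iterDiff_cons_nat_mul_nonpos {g : ℝ → ℝ} {u : ℝ} (hu : 0 ≤ u) {l : List ℝ}
    (h : ∀ x, 0 ≤ x → iterDiff (u :: l) g x ≤ 0) (p : ℕ) :
    ∀ x, 0 ≤ x → iterDiff ((p * u) :: l) g x ≤ 0 := by
  induction p with
  | zero => intro x _; simp
  | succ p ih =>
    intro x hx
    rw [Nat.cast_succ, add_one_mul, iterDiff_cons_add]
    have : 0 ≤ x + p * u := by positivity
    linarith [ih x hx, h _ this]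

lemma NegDefOnNonneg.iterDiff_map_nat_mul_nonpos {g : ℝ → ℝ} (hg : NegDefOnNonneg g)
    (hg₀ : ∀ x, 0 ≤ x → 0 ≤ g x) {u : ℝ} (hu : 0 ≤ u) {ps : List ℕ} (hps : ps ≠ [])
    {x : ℝ} (hx : 0 ≤ x) : iterDiff (ps.map fun p : ℕ => (p : ℝ) * u) g x ≤ 0 := by
  suffices ∀ (ps : List ℕ) (k : ℕ), ps ≠ [] ∨ k ≠ 0 → ∀ x, 0 ≤ x →
      iterDiff (ps.map (fun p : ℕ => (p : ℝ) * u) ++ List.replicate k u) g x ≤ 0 by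
    simpa using this ps 0 (Or.inl hps) x hx
  intro ps
  induction ps with
  | nil =>
    intro k hk x hx
    simpa using hg.iterDiff_replicate_nonpos hg₀ hu (hk.resolve_left (by simp)) hx
  | cons p ps ih =>
    intro k _
    rw [List.map_cons, List.cons_append]
    refine iterDiff_cons_nat_mul_nonpos hu (fun x hx => ?_) p
    rw [iterDiff_perm List.perm_middle.symm, ← List.replicate_succ]
    exact ih (k + 1) (Or.inr k.succ_ne_zero) x hx

lemma tendsto_iterDiff_map {g : ℝ → ℝ} (hg : ContinuousOn g (Set.Ici 0)) {α : Type*}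
    {F : Filter α} {φ : α → ℝ → ℝ} {x : α → ℝ} {x₀ : ℝ} (l : List ℝ)
    (hφ₀ : ∀ i, ∀ a ∈ l, 0 ≤ φ i a) (hφ : ∀ a ∈ l, Tendsto (fun i => φ i a) F (𝓝 a))
    (hx₀ : ∀ i, 0 ≤ x i) (hx : Tendsto x F (𝓝 x₀)) (hl₀ : ∀ a ∈ l, 0 ≤ a) (h₀ : 0 ≤ x₀) :
    Tendsto (fun i => iterDiff (l.map (φ i)) g (x i)) F (𝓝 (iterDiff l g x₀)) := by
  induction l generalizing x x₀ with
  | nil =>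
    exact (hg x₀ h₀).tendsto.comp (tendsto_nhdsWithin_iff.2 ⟨hx, Eventually.of_forall hx₀⟩)
  | cons a l ih =>
    simp only [List.mem_cons, forall_eq_or_imp] at hφ₀ hφ hl₀
    have hφ₀' : ∀ i, ∀ b ∈ l, 0 ≤ φ i b := fun i => (hφ₀ i).2
    simp only [List.map_cons, iterDiff_cons]
    exact (ih hφ₀' hφ.2 hx₀ hx hl₀.2 h₀).sub (ih hφ₀' hφ.2 (fun i => add_nonneg (hx₀ i) (hφ₀ i).1)
      (hx.add hφ.1) hl₀.2 (add_nonneg h₀ hl₀.1))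

def CompletelyMonotone (h : ℝ → ℝ) : Prop :=
  ∀ l : List ℝ, (∀ a ∈ l, 0 ≤ a) → ∀ x, 0 ≤ x → 0 ≤ iterDiff l h x

def CompletelyAlternating (g : ℝ → ℝ) : Prop :=
  ∀ l : List ℝ, l ≠ [] → (∀ a ∈ l, 0 ≤ a) → ∀ x, 0 ≤ x → iterDiff l g x ≤ 0

theorem Bernstein.completelyAlternating {g : ℝ → ℝ} (hg : Bernstein g) :
    CompletelyAlternating g := by
  obtain ⟨hcont, hg₀, hnd⟩ := hg
  intro l hl hl₀ x hx
  set φ : ℕ → ℝ → ℝ := fun n a => (⌊a * 2 ^ n⌋₊ : ℝ) * (2 ^ n)⁻¹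
  have hφ (a : ℝ) (ha : a ∈ l) : Tendsto (fun n => φ n a) atTop (𝓝 a) := by
    have := (tendsto_nat_floor_mul_div_atTop (hl₀ a ha)).comp
      (tendsto_pow_atTop_atTop_of_one_lt one_lt_two)
    simpa [φ, Function.comp_def, div_eq_mul_inv] using this
  refine le_of_tendsto' (tendsto_iterDiff_map hcont l (fun n a _ => by positivity) hφ
    (fun _ => hx) tendsto_const_nhds hl₀ hx) fun n => ?_
  simpa [List.map_map, Function.comp_def] using NegDefOnNonneg.iterDiff_map_nat_mul_nonpos hnd hg₀
    (u := (2 ^ n)⁻¹) (by positivity) (ps := l.map fun a => ⌊a * 2 ^ n⌋₊) (by simpa using hl) hx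

lemma CompletelyMonotone.nonneg {h : ℝ → ℝ} (hh : CompletelyMonotone h) {x : ℝ} (hx : 0 ≤ x) :
    0 ≤ h x :=
  hh [] (by simp) x hx

lemma CompletelyMonotone.sub_shift {h : ℝ → ℝ} (hh : CompletelyMonotone h) {w : ℝ} (hw : 0 ≤ w) :
    CompletelyMonotone fun x => h x - h (x + w) := by
  intro l hl x hx
  have := hh (l ++ [w]) (by simpa [or_imp, forall_and] using ⟨hl, hw⟩) x hx
  rwa [iterDiff_append] at this

lemma CompletelyAlternating.completelyMonotone_shift_sub {g : ℝ → ℝ}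
    (hg : CompletelyAlternating g) {w : ℝ} (hw : 0 ≤ w) :
    CompletelyMonotone fun x => g (x + w) - g x := by
  intro l hl x hx
  have := hg (l ++ [w]) (by simp) (by simpa [or_imp, forall_and] using ⟨hl, hw⟩) x hx
  rw [iterDiff_append] at this
  have hneg := iterDiff_neg l (iterDiff [w] g) x
  simp only [iterDiff_cons, iterDiff_nil, neg_sub] at hneg
  linarith

lemma CompletelyAlternating.monotoneOn {g : ℝ → ℝ} (hg : CompletelyAlternating g) :
    MonotoneOn g (Set.Ici 0) := by
  intro x hx y _ hxy
  have := hg [y - x] (by simp) (by simpa using hxy) x hx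
  simp only [iterDiff_cons, iterDiff_nil, add_sub_cancel] at this
  linarith

lemma CompletelyAlternating.sub_le_nat_mul {g : ℝ → ℝ} (hg : CompletelyAlternating g) {t : ℝ}
    (ht : 0 ≤ t) (n : ℕ) : g (n * t) - g 0 ≤ n * (g t - g 0) := by
  induction n with
  | zero => simp
  | succ n ih =>
    -- the increment over `[n t, (n + 1) t]` is at most the one over `[0, t]`
    have := hg [n * t, t] (by simp) (by simp [ht]; positivity) 0 le_rfl
    simp only [iterDiff_cons, iterDiff_nil, zero_add] at this
    rw [Nat.cast_succ, add_one_mul, add_one_mul]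
    linarith

lemma CompletelyAlternating.apply_zero_lt_apply_one {g : ℝ → ℝ} (hg : CompletelyAlternating g)
    (hnc : ∃ x y : ℝ, 0 ≤ x ∧ 0 ≤ y ∧ g x ≠ g y) : g 0 < g 1 := by
  refine (hg.monotoneOn Set.self_mem_Ici (Set.mem_Ici.2 zero_le_one) zero_le_one).lt_of_ne
    fun h01 => ?_
  have hconst (x : ℝ) (hx : 0 ≤ x) : g x = g 0 := by
    set n : ℕ := ⌈x⌉₊ + 1
    have hn : (0 : ℝ) < n := by positivity
    have ht : x / n ≤ 1 := (div_le_one hn).2 (by simp only [n]; push_cast; linarith [Nat.le_ceil x])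
    have := hg.sub_le_nat_mul (div_nonneg hx hn.le) n
    rw [mul_div_cancel₀ x hn.ne'] at this
    have hle := hg.monotoneOn (Set.mem_Ici.2 (div_nonneg hx hn.le)) (Set.mem_Ici.2 zero_le_one) ht
    have hge := hg.monotoneOn Set.self_mem_Ici (Set.mem_Ici.2 hx) hx
    nlinarith
  obtain ⟨x, y, hx, hy, hxy⟩ := hnc
  exact hxy ((hconst x hx).trans (hconst y hy).symm)

lemma sum_sum_mul_mul_const {ι : Type*} [Fintype ι] (a : ι → ℝ) (c : ℝ) :
    ∑ j, ∑ k, a j * a k * c = (∑ j, a j) ^ 2 * c := by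
  rw [sq, Finset.sum_mul_sum, Finset.sum_mul]
  simp only [Finset.sum_mul]

section BlockKernel

variable {ι β : Type*} (S : β → ι → Prop) [∀ i j, Decidable (S i j)]

/-- By Möbius inversion, `θ (K j ∪ K k)` has this form with all `wᵢ ≥ 0` when `θ` is negative
definite. -/
def blockKernel (c₀ : ℝ) (s : Finset β) (w : β → ℝ) (j k : ι) : ℝ :=
  c₀ - ∑ i ∈ s, if S i j ∧ S i k then w i else 0

variable {S} [DecidableEq β] {c₀ : ℝ} {s : Finset β} {w : β → ℝ} {i : β}

lemma blockKernel_insert_le (hi : i ∉ s) (hw : 0 ≤ w i) (j k : ι) :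
    blockKernel S c₀ (insert i s) w j k ≤ blockKernel S c₀ s w j k := by
  simp only [blockKernel, Finset.sum_insert hi]
  split_ifs <;> linarith

lemma blockKernel_insert_of_mem (hi : i ∉ s) {j k : ι} (hj : S i j) (hk : S i k) :
    blockKernel S c₀ (insert i s) w j k = blockKernel S (c₀ - w i) s w j k := by
  simp only [blockKernel, Finset.sum_insert hi, if_pos (And.intro hj hk)]
  ring

lemma blockKernel_nonneg_of_insert (hi : i ∉ s) {a : ι → ℝ}
    (ha : ∀ j k, a j ≠ 0 → a k ≠ 0 → 0 ≤ blockKernel S c₀ (insert i s) w j k) (j k : ι)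
    (hj : (if S i j then a j else 0) ≠ 0) (hk : (if S i k then a k else 0) ≠ 0) :
    0 ≤ blockKernel S (c₀ - w i) s w j k := by
  rw [ne_eq, ite_eq_right_iff, Classical.not_imp] at hj hk
  rw [← blockKernel_insert_of_mem hi hj.1 hk.1]
  exact ha j k hj.2 hk.2

lemma sum_mul_blockKernel_insert [Fintype ι] (hi : i ∉ s) (F : ℝ → ℝ) (a : ι → ℝ) :
    ∑ j, ∑ k, a j * a k * F (blockKernel S c₀ (insert i s) w j k) =
      ∑ j, ∑ k, a j * a k * F (blockKernel S c₀ s w j k) +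
      ∑ j, ∑ k, (if S i j then a j else 0) * (if S i k then a k else 0) *
        (F (blockKernel S (c₀ - w i) s w j k) - F (blockKernel S (c₀ - w i) s w j k + w i)) := by
  simp only [← Finset.sum_add_distrib]
  refine Finset.sum_congr rfl fun j _ => Finset.sum_congr rfl fun k _ => ?_
  have hshift : blockKernel S (c₀ - w i) s w j k + w i = blockKernel S c₀ s w j k := by
    simp only [blockKernel]; ring
  by_cases hj : S i j <;> by_cases hk : S i k
  · rw [blockKernel_insert_of_mem hi hj hk, hshift, if_pos hj, if_pos hk]; ring
  all_goals simp [blockKernel, Finset.sum_insert hi, hj, hk]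

lemma CompletelyMonotone.sum_mul_blockKernel_nonneg [Fintype ι] {h : ℝ → ℝ}
    (hh : CompletelyMonotone h) (hw : ∀ i ∈ s, 0 ≤ w i) (b : ι → ℝ)
    (hb : ∀ j k, b j ≠ 0 → b k ≠ 0 → 0 ≤ blockKernel S c₀ s w j k) :
    0 ≤ ∑ j, ∑ k, b j * b k * h (blockKernel S c₀ s w j k) := by
  induction s using Finset.induction_on generalizing h c₀ b with
  | empty =>
    by_cases hc₀ : 0 ≤ c₀
    · simp only [blockKernel, Finset.sum_empty, sub_zero, sum_sum_mul_mul_const]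
      exact mul_nonneg (sq_nonneg _) (hh.nonneg hc₀)
    · have hb₀ (j : ι) : b j = 0 := by
        by_contra hj; simpa [blockKernel, hc₀] using hb j j hj hj
      simp [hb₀]
  | insert i s hi ih =>
    rw [sum_mul_blockKernel_insert hi]
    have hwi : 0 ≤ w i := hw i (Finset.mem_insert_self i s)
    have hw' : ∀ i ∈ s, 0 ≤ w i := fun i hi => hw i (Finset.mem_insert_of_mem hi)
    refine add_nonneg (ih hh hw' b fun j k hj hk => ?_)
      (ih (hh.sub_shift hwi) hw' _ (blockKernel_nonneg_of_insert hi hb))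
    exact (hb j k hj hk).trans (blockKernel_insert_le hi hwi j k)

lemma CompletelyAlternating.sum_mul_blockKernel_nonpos [Fintype ι] {g : ℝ → ℝ}
    (hg : CompletelyAlternating g) (hw : ∀ i ∈ s, 0 ≤ w i) (a : ι → ℝ) (ha : ∑ j, a j = 0)
    (hsupp : ∀ j k, a j ≠ 0 → a k ≠ 0 → 0 ≤ blockKernel S c₀ s w j k) :
    ∑ j, ∑ k, a j * a k * g (blockKernel S c₀ s w j k) ≤ 0 := by
  induction s using Finset.induction_on generalizing c₀ with
  | empty => simp [blockKernel, sum_sum_mul_mul_const, ha]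
  | insert i s hi ih =>
    rw [sum_mul_blockKernel_insert hi]
    have hwi : 0 ≤ w i := hw i (Finset.mem_insert_self i s)
    have hw' : ∀ i ∈ s, 0 ≤ w i := fun i hi => hw i (Finset.mem_insert_of_mem hi)
    refine add_nonpos (ih hw' fun j k hj hk => ?_) ?_
    · exact (hsupp j k hj hk).trans (blockKernel_insert_le hi hwi j k)
    · have := (hg.completelyMonotone_shift_sub hwi).sum_mul_blockKernel_nonneg hw' _
        (blockKernel_nonneg_of_insert hi hsupp)
      simp only [← neg_sub (g (_ + w i)), mul_neg, Finset.sum_neg_distrib]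
      linarith
end BlockKernel

section Moebius

open IncidenceAlgebra

variable {α : Type*} [SemilatticeSup α] [LocallyFiniteOrder α] [DecidableEq α]

def upperMoebius (f : α → ℝ) (t M : α) : ℝ :=
  ∑ N ∈ Icc M t, mu ℝ M N * f N

lemma sum_Icc_upperMoebius (f : α → ℝ) {a t : α} (h : a ≤ t) :
    ∑ M ∈ Icc a t, upperMoebius f t M = f a := by
  simp only [upperMoebius]
  rw [Finset.sum_comm' (t' := Icc a t) (s' := fun N => Icc a N)]
  · simp_rw [← Finset.sum_mul, sum_Icc_mu_left]
    simp [h]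
  · simp only [Finset.mem_Icc]
    exact fun M N => ⟨fun ⟨⟨haM, _⟩, hMN, hNt⟩ => ⟨⟨haM, hMN⟩, haM.trans hMN, hNt⟩,
      fun ⟨⟨haM, hMN⟩, _, hNt⟩ => ⟨⟨haM, hMN.trans hNt⟩, hMN, hNt⟩⟩

lemma sum_Icc_mu_mul_mu_mul_sup (f : α → ℝ) {M t : α} (hM : M ≤ t) :
    ∑ A ∈ Icc M t, ∑ B ∈ Icc M t, mu ℝ M A * mu ℝ M B * f (A ⊔ B) = upperMoebius f t M := by
  classical
  set c := upperMoebius f t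
  set x : α → α → ℝ := fun N A => if A ≤ N then mu ℝ M A else 0
  have hx (N : α) (hN : N ∈ Icc M t) : ∑ A ∈ Icc M t, x N A = if M = N then 1 else 0 := by
    rw [← Finset.sum_filter, ← sum_Icc_mu_right]
    congr 1; ext A
    simp only [Finset.mem_filter, Finset.mem_Icc] at hN ⊢
    exact ⟨fun ⟨⟨hMA, _⟩, hAN⟩ => ⟨hMA, hAN⟩, fun ⟨hMA, hAN⟩ => ⟨⟨hMA, hAN.trans hN.2⟩, hAN⟩⟩
  calc ∑ A ∈ Icc M t, ∑ B ∈ Icc M t, mu ℝ M A * mu ℝ M B * f (A ⊔ B)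
      = ∑ A ∈ Icc M t, ∑ B ∈ Icc M t, ∑ N ∈ Icc M t, x N A * x N B * c N := by
        refine Finset.sum_congr rfl fun A hA => Finset.sum_congr rfl fun B hB => ?_
        simp only [Finset.mem_Icc] at hA hB
        have hIcc : Icc (A ⊔ B) t = (Icc M t).filter (fun N => A ⊔ B ≤ N) := by
          ext N
          simp only [Finset.mem_Icc, Finset.mem_filter]
          exact ⟨fun h => ⟨⟨hA.1.trans (le_sup_left.trans h.1), h.2⟩, h.1⟩,
            fun h => ⟨h.2, h.1.2⟩⟩
        rw [← sum_Icc_upperMoebius f (sup_le hA.2 hB.2), Finset.mul_sum, hIcc, Finset.sum_filter]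
        refine Finset.sum_congr rfl fun N _ => ?_
        by_cases hAN : A ≤ N <;> by_cases hBN : B ≤ N <;> simp [x, c, hAN, hBN]
    _ = ∑ N ∈ Icc M t, (∑ A ∈ Icc M t, x N A) * (∑ B ∈ Icc M t, x N B) * c N := by
        refine (Finset.sum_congr rfl fun A _ => Finset.sum_comm).trans (Finset.sum_comm.trans ?_)
        simp only [Finset.sum_mul, Finset.mul_sum]
        exact Finset.sum_congr rfl fun _ _ => Finset.sum_comm
    _ = c M := by
        rw [Finset.sum_congr rfl fun N hN => by rw [hx N hN]]
        simp [hM]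

lemma apply_sup_eq_blockKernel [OrderBot α] [DecidableLE α] (f : α → ℝ) {ι : Type*} (K : ι → α)
    {t : α} (hK : ∀ j, K j ≤ t) (j k : ι) :
    f (K j ⊔ K k) = blockKernel (fun M j => K j ≤ M) (upperMoebius f t t) ((Iic t).erase t)
      (fun M => -upperMoebius f t M) j k := by
  have hIcc : Icc (K j ⊔ K k) t = (Iic t).filter (fun M => K j ≤ M ∧ K k ≤ M) := by
    ext M
    simp only [Finset.mem_Icc, Finset.mem_filter, Finset.mem_Iic, sup_le_iff]
    tauto
  rw [← sum_Icc_upperMoebius f (sup_le (hK j) (hK k)), hIcc, Finset.sum_filter,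
    ← Finset.add_sum_erase _ _ (Finset.mem_Iic.2 le_rfl), if_pos ⟨hK j, hK k⟩, blockKernel,
    sub_eq_add_neg, ← Finset.sum_neg_distrib]
  congr 1
  refine Finset.sum_congr rfl fun M _ => ?_
  split_ifs <;> simp

end Moebius

lemma NegDef.sum_finset_nonpos {T : Type*} [DecidableEq T] {ψ : Finset T → ℝ} (hψ : NegDef ψ)
    {ι : Type*} (s : Finset ι) (K : ι → Finset T) (a : ι → ℝ) (ha : ∑ i ∈ s, a i = 0) :
    ∑ i ∈ s, ∑ j ∈ s, a i * a j * ψ (K i ∪ K j) ≤ 0 := by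
  rcases lt_or_ge s.card 2 with hs | hs
  · have ha₀ (i : ι) (hi : i ∈ s) : a i = 0 := by
      rwa [Finset.eq_singleton_iff_unique_mem.2 ⟨hi, fun j hj =>
        Finset.card_le_one.1 (by omega) j hj i hi⟩, Finset.sum_singleton] at ha
    exact (Finset.sum_eq_zero fun i hi => Finset.sum_eq_zero fun j _ => by simp [ha₀ i hi]).le
  · set e := s.equivFin
    have hsum (F : ι → ℝ) : ∑ i : Fin s.card, F (e.symm i) = ∑ i ∈ s, F i :=
      (e.symm.sum_comp (fun i => F i)).trans (Finset.sum_coe_sort s F)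
    convert hψ s.card hs (fun i => K (e.symm i)) (fun i => a (e.symm i)) (by rw [hsum a, ha])
      using 1
    rw [← hsum]
    exact Finset.sum_congr rfl fun i _ => (hsum _).symm

lemma NegDef.upperMoebius_nonpos {T : Type*} [DecidableEq T] {ψ : Finset T → ℝ} (hψ : NegDef ψ)
    {M t : Finset T} (hM : M ⊆ t) (hne : M ≠ t) : upperMoebius ψ t M ≤ 0 := by
  rw [← sum_Icc_mu_mul_mu_mul_sup ψ hM]
  exact hψ.sum_finset_nonpos (Icc M t) id _ (by rw [IncidenceAlgebra.sum_Icc_mu_right, if_neg hne])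

theorem NegDef.comp_completelyAlternating {T : Type*} [DecidableEq T] {θ : Finset T → ℝ}
    (hθ₀ : ∀ A, 0 ≤ θ A) (hθ : NegDef θ) {g : ℝ → ℝ} (hg : CompletelyAlternating g) :
    NegDef fun A => g (θ A) := by
  intro n _ K a ha
  have hK (j : Fin n) : K j ⊆ univ.sup K := Finset.le_sup (Finset.mem_univ j)
  have hrep := apply_sup_eq_blockKernel θ K hK
  simp only [Finset.sup_eq_union] at hrep
  simp only [hrep]
  refine hg.sum_mul_blockKernel_nonpos (fun M hM => ?_) a ha fun j k _ _ => ?_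
  · exact neg_nonneg.2 (hθ.upperMoebius_nonpos (Finset.mem_Iic.1 (Finset.mem_of_mem_erase hM))
      (Finset.ne_of_mem_erase hM))
  · rw [← hrep]; exact hθ₀ _

lemma NegDef.sub_const_div {T : Type*} [DecidableEq T] {ψ : Finset T → ℝ} (hψ : NegDef ψ)
    (c : ℝ) {d : ℝ} (hd : 0 ≤ d) : NegDef fun A => (ψ A - c) / d := by
  intro n hn K a ha
  have hsplit : ∑ j, ∑ k, a j * a k * ((ψ (K j ∪ K k) - c) / d)
      = (∑ j, ∑ k, a j * a k * ψ (K j ∪ K k)) / d - ∑ j, ∑ k, a j * a k * (c / d) := by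
    simp only [Finset.sum_div, ← Finset.sum_sub_distrib]
    refine Finset.sum_congr rfl fun j _ => Finset.sum_congr rfl fun k _ => ?_
    ring
  rw [hsplit, sum_sum_mul_mul_const, ha]
  simpa using div_nonpos_of_nonpos_of_nonneg (hψ n hn K a ha) hd

/-- A nonconstant Bernstein function `g` operates on ECFs: if `θ ∈ Θ(T)` then
`A ↦ (g(θ(A)) − g(0))/(g(1) − g(0))` is again in `Θ(T)`. -/
theorem Bernstein_operates_on_ECF {T : Type*} [DecidableEq T]
    (g : ℝ → ℝ) (hg : Bernstein g)
    (hnc : ∃ x y : ℝ, 0 ≤ x ∧ 0 ≤ y ∧ g x ≠ g y)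
    (θ : Finset T → ℝ) (hθ : IsECF θ) :
    IsECF (fun A => (g (θ A) - g 0) / (g 1 - g 0)) := by
  obtain ⟨hθ₀, hθnd, hθempty, hθsingleton⟩ := hθ
  have hca := hg.completelyAlternating
  have hD : 0 < g 1 - g 0 := sub_pos.2 (hca.apply_zero_lt_apply_one hnc)
  refine ⟨fun A => div_nonneg ?_ hD.le,
    (hθnd.comp_completelyAlternating hθ₀ hca).sub_const_div _ hD.le, by simp [hθempty],
    fun t => by simp [hθsingleton, hD.ne']⟩
  exact sub_nonneg.2 (hca.monotoneOn Set.self_mem_Ici (Set.mem_Ici.2 (hθ₀ A)) (hθ₀ A))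
end

section
/- Let θ ∈ Θ(T) be an ECF, η := θ − 1 (restricted to nonempty finite sets), and let g be a Bernstein function. Then for all nonempty finite A, B, C ⊆ T: g(η(A∪B)) ≤ g(η(C)) + g(η(A∪B)) and g(η(C)) + g(η(A∪B)) ≤ g(η(A∪C)) + g(η(C∪B)). In particular, writing f = g∘η, one has the triangle inequality f(A∪B) ≤ f(A∪C) + f(C∪B). -/
open Finset

/-!
A Bernstein function `g` is midpoint concave (the case `n = 2` of its defining inequality) and
continuous, hence concave; being also bounded below on `[0, ∞)`, it is nondecreasing. On the
other side, negative definiteness of `θ` on `(Finset T, ∪)` makes `θ` monotone and gives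
`θ C + θ (A ∪ B ∪ C) ≤ θ (A ∪ C) + θ (C ∪ B)`. So `η C ≤ η (A ∪ C) ≤ η (A ∪ B ∪ C)` with
`η C + η (A ∪ B ∪ C) ≤ η (A ∪ C) + η (C ∪ B)`, and for a concave nondecreasing `g` this yields
`g (η C) + g (η (A ∪ B ∪ C)) ≤ g (η (A ∪ C)) + g (η (C ∪ B))`; monotonicity of `g` lets
`A ∪ B` replace `A ∪ B ∪ C` on the left.
-/

section Concavity

/-- A minimiser `t₀` of `φ` is the midpoint of `t₀` and its reflection in the nearer endpoint,
so that endpoint is a minimiser too. -/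
theorem min_le_of_midpoint_concave {φ : ℝ → ℝ} {a b : ℝ} (hab : a ≤ b)
    (hφ : ContinuousOn φ (Set.Icc a b))
    (hmid : ∀ s ∈ Set.Icc a b, ∀ t ∈ Set.Icc a b, φ s + φ t ≤ 2 * φ ((s + t) / 2))
    {t : ℝ} (ht : t ∈ Set.Icc a b) : min (φ a) (φ b) ≤ φ t := by
  obtain ⟨t₀, ht₀, hmin⟩ := isCompact_Icc.exists_isMinOn (Set.nonempty_Icc.2 hab) hφ
  have hmin_t : φ t₀ ≤ φ t := hmin ht
  rcases le_total (t₀ - a) (b - t₀) with h | h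
  · have hr : 2 * t₀ - a ∈ Set.Icc a b := ⟨by linarith [ht₀.1], by linarith⟩
    have := hmid a (Set.left_mem_Icc.2 hab) _ hr
    rw [show (a + (2 * t₀ - a)) / 2 = t₀ by ring] at this
    linarith [min_le_left (φ a) (φ b), (isMinOn_iff.1 hmin _ hr)]
  · have hr : 2 * t₀ - b ∈ Set.Icc a b := ⟨by linarith, by linarith [ht₀.2]⟩
    have := hmid b (Set.right_mem_Icc.2 hab) _ hr
    rw [show (b + (2 * t₀ - b)) / 2 = t₀ by ring] at this
    linarith [min_le_right (φ a) (φ b), (isMinOn_iff.1 hmin _ hr)]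

theorem concaveOn_of_midpoint {s : Set ℝ} {g : ℝ → ℝ} (hs : Convex ℝ s)
    (hg : ContinuousOn g s) (hmid : ∀ x ∈ s, ∀ y ∈ s, g x + g y ≤ 2 * g ((x + y) / 2)) :
    ConcaveOn ℝ s g := by
  refine ⟨hs, fun x hx y hy a b ha hb hab => ?_⟩
  let p : ℝ → ℝ := fun t => (1 - t) * x + t * y
  have hp : Set.MapsTo p (Set.Icc 0 1) s := fun t ht =>
    hs hx hy (by linarith [ht.2]) ht.1 (by ring)
  let φ : ℝ → ℝ := fun t => g (p t) - ((1 - t) * g x + t * g y)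
  have hφ : ContinuousOn φ (Set.Icc 0 1) :=
    (hg.comp (by fun_prop : Continuous p).continuousOn hp).sub (by fun_prop)
  have hφmid : ∀ r ∈ Set.Icc (0 : ℝ) 1, ∀ t ∈ Set.Icc (0 : ℝ) 1,
      φ r + φ t ≤ 2 * φ ((r + t) / 2) := by
    intro r hr t ht
    have := hmid _ (hp hr) _ (hp ht)
    rw [show (p r + p t) / 2 = p ((r + t) / 2) by simp only [p]; ring] at this
    simp only [φ]
    linarith
  have := min_le_of_midpoint_concave zero_le_one hφ hφmid ⟨hb, by linarith⟩
  simp only [φ, p, smul_eq_mul] at this ⊢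
  rw [show a = 1 - b by linarith]
  norm_num at this
  linarith

/-- If `g` decreased from `x` to `y`, concavity would force it below every bound far to the
right of `y`. -/
theorem ConcaveOn.monotoneOn_of_bddBelow {g : ℝ → ℝ} {a : ℝ} (hg : ConcaveOn ℝ (Set.Ici a) g)
    (hbdd : BddBelow (g '' Set.Ici a)) : MonotoneOn g (Set.Ici a) := by
  intro x hx y hy hxy
  obtain ⟨m, hm⟩ := hbdd
  by_contra! hlt
  rcases hxy.eq_or_lt with rfl | hxy
  · exact lt_irrefl _ hlt
  have hmy : m ≤ g y := hm ⟨y, hy, rfl⟩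
  set c := (g x - g y) / (2 * (g x - m)) with hc
  have hc0 : 0 < c := div_pos (by linarith) (by linarith)
  have hc1 : c ≤ 1 := by rw [hc, div_le_one (by linarith)]; linarith
  set z := x + (y - x) / c
  have hz : z ∈ Set.Ici a := by
    simp only [Set.mem_Ici] at hx ⊢; linarith [div_pos (sub_pos.2 hxy) hc0]
  have hconc := hg.2 hx hz (by linarith : (0 : ℝ) ≤ 1 - c) hc0.le (by ring)
  rw [smul_eq_mul, smul_eq_mul, smul_eq_mul, smul_eq_mul,
    show (1 - c) * x + c * z = y by simp only [z]; field_simp; ring] at hconc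
  have hmz : m ≤ g z := hm ⟨z, hz, rfl⟩
  have hcm : c * (g x - m) = (g x - g y) / 2 := by
    rw [hc]; field_simp [(show 0 < g x - m by linarith).ne']
  linarith [mul_le_mul_of_nonneg_left hmz hc0.le]

/-- `v` and `u + z - v` are the convex combinations of `u` and `z` with swapped weights. -/
theorem ConcaveOn.map_add_map_le {s : Set ℝ} {g : ℝ → ℝ} (hg : ConcaveOn ℝ s g)
    {u v z : ℝ} (hu : u ∈ s) (hz : z ∈ s) (huv : u ≤ v) (hvz : v ≤ z) :
    g u + g z ≤ g v + g (u + z - v) := by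
  rcases (huv.trans hvz).eq_or_lt with rfl | huz
  · obtain rfl := le_antisymm hvz huv
    simp
  set l := (z - v) / (z - u) with hl
  have hl0 : 0 ≤ l := div_nonneg (by linarith) (by linarith)
  have hl1 : l ≤ 1 := by rw [hl, div_le_one (by linarith)]; linarith
  have h₁ := hg.2 hu hz hl0 (by linarith : 0 ≤ 1 - l) (by ring)
  have h₂ := hg.2 hu hz (by linarith : 0 ≤ 1 - l) hl0 (by ring)
  simp only [smul_eq_mul] at h₁ h₂
  rw [show l * u + (1 - l) * z = v by rw [hl]; field_simp; ring] at h₁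
  rw [show (1 - l) * u + l * z = u + z - v by rw [hl]; field_simp; ring] at h₂
  linarith

theorem ConcaveOn.map_add_map_le_of_monotoneOn {s : Set ℝ} {g : ℝ → ℝ}
    (hg : ConcaveOn ℝ s g) (hmono : MonotoneOn g s) {u v w z : ℝ} (hu : u ∈ s) (hw : w ∈ s)
    (hz : z ∈ s) (huv : u ≤ v) (hvz : v ≤ z) (h : u + z ≤ v + w) :
    g u + g z ≤ g v + g w := by
  have hw' : u + z - v ∈ s := hg.1.ordConnected.out hu hz ⟨by linarith, by linarith⟩
  linarith [hg.map_add_map_le hu hz huv hvz, hmono hw' hw (by linarith)]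

end Concavity

namespace Bernstein

variable {g : ℝ → ℝ}

theorem midpoint_le (hg : Bernstein g) {x y : ℝ} (hx : 0 ≤ x) (hy : 0 ≤ y) :
    g x + g y ≤ 2 * g ((x + y) / 2) := by
  have := hg.2.2 2 le_rfl ![x / 2, y / 2] (by intro i; fin_cases i <;> simp <;> linarith)
    ![1, -1] (by simp)
  simp only [Fin.sum_univ_two, Fin.isValue, Matrix.cons_val_zero, Matrix.cons_val_one,
    Matrix.cons_val_fin_one] at this
  rw [add_halves, add_halves, show y / 2 + x / 2 = (x + y) / 2 by ring,
    show x / 2 + y / 2 = (x + y) / 2 by ring] at this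
  linarith

theorem concaveOn (hg : Bernstein g) : ConcaveOn ℝ (Set.Ici 0) g :=
  concaveOn_of_midpoint (convex_Ici 0) hg.1 fun _ hx _ hy => hg.midpoint_le hx hy

theorem monotoneOn (hg : Bernstein g) : MonotoneOn g (Set.Ici 0) :=
  hg.concaveOn.monotoneOn_of_bddBelow ⟨0, by rintro _ ⟨x, hx, rfl⟩; exact hg.2.1 x hx⟩

end Bernstein

namespace NegDef

variable {T : Type*} [DecidableEq T] {ψ : Finset T → ℝ}

theorem monotone (hψ : NegDef ψ) : Monotone ψ := by
  intro P Q hPQ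
  have := hψ 2 le_rfl ![P, Q] ![1, -1] (by simp)
  simp [Fin.sum_univ_two, union_eq_right.2 hPQ, union_eq_left.2 hPQ] at this
  linarith

theorem add_union_le (hψ : NegDef ψ) {P Q R : Finset T} (hPQ : P ⊆ Q) (hPR : P ⊆ R) :
    ψ P + ψ (Q ∪ R) ≤ ψ Q + ψ R := by
  have := hψ 4 (by norm_num) ![P, Q, R, Q ∪ R] ![-1, 1, 1, -1] (by simp [Fin.sum_univ_four])
  simp [Fin.sum_univ_four, union_eq_right.2 hPQ, union_eq_left.2 hPQ, union_eq_right.2 hPR,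
    union_eq_left.2 hPR, union_eq_right.2 (hPQ.trans subset_union_left),
    union_eq_left.2 (hPQ.trans subset_union_left), union_comm R Q,
    union_eq_right.2 (subset_union_right : R ⊆ Q ∪ R)] at this
  linarith

end NegDef

theorem IsECF.one_le {T : Type*} [DecidableEq T] {θ : Finset T → ℝ} (hθ : IsECF θ)
    {D : Finset T} (hD : D.Nonempty) : 1 ≤ θ D := by
  obtain ⟨t, ht⟩ := hD
  exact hθ.2.2.2 t ▸ hθ.2.1.monotone (singleton_subset_iff.2 ht)

/-- Triangle inequalities: for an ECF `θ`, `η := θ − 1` and a Bernstein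
function `g`, one has `g∘η(A∪B) ≤ g∘η(C) + g∘η(A∪B) ≤ g∘η(A∪C) + g∘η(C∪B)`,
and in particular `g∘η(A∪B) ≤ g∘η(A∪C) + g∘η(C∪B)`. -/
theorem Bernstein_triangle_inequalities {T : Type*} [DecidableEq T]
    (θ : Finset T → ℝ) (hθ : IsECF θ) (g : ℝ → ℝ) (hg : Bernstein g)
    (η : Finset T → ℝ) (hη : ∀ A : Finset T, A.Nonempty → η A = θ A - 1) :
    ∀ A B C : Finset T, A.Nonempty → B.Nonempty → C.Nonempty →
      g (η (A ∪ B)) ≤ g (η C) + g (η (A ∪ B)) ∧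
      g (η C) + g (η (A ∪ B)) ≤ g (η (A ∪ C)) + g (η (C ∪ B)) ∧
      g (η (A ∪ B)) ≤ g (η (A ∪ C)) + g (η (C ∪ B)) := by
  intro A B C hA _ hC
  have hη₀ : ∀ P : Finset T, P.Nonempty → η P ∈ Set.Ici 0 := fun P hP => by
    rw [hη P hP, Set.mem_Ici, sub_nonneg]; exact hθ.one_le hP
  have hηmono : ∀ {P Q : Finset T}, P.Nonempty → P ⊆ Q → η P ≤ η Q := fun hP hPQ => by
    rw [hη _ hP, hη _ (hP.mono hPQ)]; linarith [hθ.2.1.monotone hPQ]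
  set D := A ∪ C ∪ (C ∪ B)
  have hAB : (A ∪ B).Nonempty := hA.mono subset_union_left
  have hAC : (A ∪ C).Nonempty := hA.mono subset_union_left
  have hCB : (C ∪ B).Nonempty := hC.mono subset_union_left
  have hD : D.Nonempty := hAC.mono subset_union_left
  have hsub : η C + η D ≤ η (A ∪ C) + η (C ∪ B) := by
    rw [hη C hC, hη _ hAC, hη _ hCB, hη D hD]
    linarith [hθ.2.1.add_union_le (subset_union_right : C ⊆ A ∪ C)
      (subset_union_left : C ⊆ C ∪ B)]
  have hAB_D : g (η (A ∪ B)) ≤ g (η D) := hg.monotoneOn (hη₀ _ hAB) (hη₀ D hD)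
    (hηmono hAB (union_subset_union subset_union_left subset_union_right))
  have hC_D : g (η C) + g (η D) ≤ g (η (A ∪ C)) + g (η (C ∪ B)) :=
    hg.concaveOn.map_add_map_le_of_monotoneOn hg.monotoneOn (hη₀ C hC) (hη₀ _ hCB)
      (hη₀ D hD) (hηmono hC subset_union_right) (hηmono hAC subset_union_left) hsub
  have hC₀ : 0 ≤ g (η C) := hg.2.1 _ (hη₀ C hC)
  exact ⟨by linarith, by linarith, by linarith⟩
end
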